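/- arXiv:2006.10295 — 4 statements merged into one kernel-verified Lean document; each statement's English description precedes it below -/
import Mathlib

section
/- Let p be a prime and G̃ a finite p-group that is non-cyclic and not isomorphic to any generalized quaternion group. Let Z be a subgroup of order p contained in the center of G̃. Then the quotient map π : G̃ → G̃/Z is a forcing extension. -/
/-!
Suppose some `x ∉ Z` has order `p`. A preimage of a conjugate of `xZ` is `z * (u * x * u⁻¹)` with
`z ∈ Z` central, so its `p`-th power is `1`: it has order `p`, as `xZ` has.

Such an `x` exists because a finite `p`-group whose elements of order `p` all lie in one subgroup
of order `p` is cyclic or generalized quaternion. Take `x` of maximal order `p ^ n`; then `⟨x⟩`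
contains every element of order `p`. Let `w` normalize `⟨x⟩`, with `w ∉ ⟨x⟩` and `w ^ p ∈ ⟨x⟩`,
say `w * x * w⁻¹ = x ^ s` and `w ^ p = x ^ c`. Then
`(x ^ a * w) ^ p = x ^ (a * (1 + s + ⋯ + s ^ (p - 1)) + c)`, and this vanishes for a suitable `a`
(giving an element of order `p` outside `⟨x⟩`) unless `p = 2`, `s ≡ -1` and `c ≡ 2 ^ (n - 1)`
modulo `2 ^ n`. Consequently the normalizer of `⟨x⟩` is `⟨x⟩ ∪ ⟨x⟩ * y` with `y` inverting `x`
and `y ^ 2 = x ^ 2 ^ (n - 1)`, a generalized quaternion group. Finally this normalizer is the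
whole group: for `n = 2` every square lies in `⟨x⟩`, and for `n ≥ 3` the subgroup `⟨x⟩` is
characteristic in its normalizer, which is then self-normalizing.
-/

/-- A surjective group homomorphism `π : G̃ → G` is a forcing extension if there is a conjugacy
class `C` of `G` such that for every `c ∈ C`, every preimage of `c` has the same order as `c`. -/
def IsForcingExtension {G₁ G₂ : Type*} [Group G₁] [Group G₂] (π : G₁ →* G₂) : Prop :=
  Function.Surjective π ∧
    ∃ c₀ : G₂, ∀ c : G₂, IsConj c₀ c → ∀ g : G₁, π g = c → orderOf g = orderOf c

/-- A subgroup contained in the center is normal. -/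
lemma normal_of_le_center {G : Type*} [Group G] {Z : Subgroup G}
    (h : Z ≤ Subgroup.center G) : Z.Normal := by
  constructor
  intro z hz g
  have hc := (Subgroup.mem_center_iff.mp (h hz)) g
  simpa [hc, mul_assoc] using hz

open Subgroup

theorem Int.dvd_sub_one_of_dvd_pow_sub_one {p : ℕ} (hp : p.Prime) {s : ℤ}
    (h : (p : ℤ) ∣ s ^ p - 1) : (p : ℤ) ∣ s - 1 := by
  have : Fact p.Prime := ⟨hp⟩
  rw [← ZMod.intCast_zmod_eq_zero_iff_dvd] at h ⊢
  push_cast at h ⊢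
  rwa [ZMod.pow_card] at h

theorem Int.exists_dvd_mul_mul_add_of_isCoprime {d u M c : ℤ} (hu : IsCoprime u M) (hc : d ∣ c) :
    ∃ a : ℤ, d * M ∣ a * (d * u) + c := by
  obtain ⟨α, β, hαβ⟩ := hu
  obtain ⟨c, rfl⟩ := hc
  exact ⟨-(α * c), c * β, by linear_combination (-(d * c)) * hαβ⟩

theorem Int.exists_pow_dvd_mul_geom_sum_add_of_odd {p n : ℕ} (hodd : Odd p) (hn : 1 ≤ n)
    {s c : ℤ} (hs : (p : ℤ) ∣ s - 1) (hc : (p : ℤ) ∣ c) :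
    ∃ a : ℤ, (p : ℤ) ^ n ∣ a * ∑ i ∈ Finset.range p, s ^ i + c := by
  obtain ⟨t, ht⟩ := hs
  obtain ⟨e, he⟩ := odd_sq_dvd_geom_sum₂_sub (1 : ℤ) t hodd
  have hσ : ∑ i ∈ Finset.range p, s ^ i = p * (1 + p * e) := by
    simp only [one_pow, mul_one] at he
    rw [show s = 1 + p * t by linarith]
    linear_combination he
  have hu : IsCoprime (1 + p * e) ((p : ℤ) ^ (n - 1)) := IsCoprime.pow_right ⟨1, -e, by ring⟩
  obtain ⟨a, ha⟩ := Int.exists_dvd_mul_mul_add_of_isCoprime hu hc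
  refine ⟨a, ?_⟩
  rw [hσ]
  rwa [← pow_succ', Nat.sub_add_cancel hn] at ha

theorem Int.two_pow_dvd_add_one_of_forall_not_dvd {n : ℕ} (hn : 1 ≤ n) {s c : ℤ}
    (hs : (2 : ℤ) ^ n ∣ s ^ 2 - 1) (hcs : (2 : ℤ) ^ n ∣ c * (s - 1)) (hc : 2 ∣ c)
    (h : ∀ a : ℤ, ¬ (2 : ℤ) ^ n ∣ a * (s + 1) + c) :
    (2 : ℤ) ^ n ∣ s + 1 ∧ (2 : ℤ) ^ n ∣ c - 2 ^ (n - 1) := by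
  have h2n : (2 : ℤ) ^ n = 2 ^ (n - 1) * 2 := by rw [← pow_succ, Nat.sub_add_cancel hn]
  obtain ⟨k, rfl⟩ : Odd s := by
    have h2 : Even (s ^ 2 - 1) := even_iff_two_dvd.mpr ((dvd_pow_self 2 (by omega)).trans hs)
    rw [Int.even_sub_one, Int.even_pow] at h2
    exact Int.not_even_iff_odd.mp fun hs => h2 ⟨hs, two_ne_zero⟩
  rcases Int.even_or_odd k with ⟨j, rfl⟩ | ⟨j, rfl⟩
  · -- `s ≡ 1 mod 4`: then `s + 1` is twice an odd number
    obtain ⟨a, ha⟩ := Int.exists_dvd_mul_mul_add_of_isCoprime (d := 2) (M := 2 ^ (n - 1))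
      (IsCoprime.pow_right (⟨1, -j, by ring⟩ : IsCoprime (2 * j + 1) 2)) hc
    refine absurd ?_ (h a)
    rw [h2n, mul_comm]
    convert ha using 2
    ring
  · -- `s ≡ 3 mod 4`: then `s - 1` is twice an odd number
    have hcop : IsCoprime ((2 : ℤ) ^ (n - 1)) (2 * j + 1) := IsCoprime.pow_left ⟨-j, 1, by ring⟩
    have hc' : (2 : ℤ) ^ (n - 1) ∣ c := by
      refine hcop.dvd_of_dvd_mul_right ((mul_dvd_mul_iff_right two_ne_zero).mp ?_)
      rw [← h2n, show c * (2 * j + 1) * 2 = c * (2 * (2 * j + 1) + 1 - 1) by ring]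
      exact hcs
    have hs' : (2 : ℤ) ^ (n - 1) ∣ 2 * (2 * j + 1) + 1 + 1 := by
      refine hcop.dvd_of_dvd_mul_left ((mul_dvd_mul_iff_right two_ne_zero).mp ?_)
      rw [← h2n, show (2 * j + 1) * (2 * (2 * j + 1) + 1 + 1) * 2
        = (2 * (2 * j + 1) + 1) ^ 2 - 1 by ring]
      exact hs
    obtain ⟨f, hf⟩ := hc'
    obtain ⟨e, he⟩ := hs'
    rcases Int.even_or_odd e with ⟨e, rfl⟩ | ⟨e, rfl⟩
    · rcases Int.even_or_odd f with ⟨f, rfl⟩ | ⟨f, rfl⟩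
      · exact absurd ⟨f, by rw [hf, h2n]; ring⟩ (h 0)
      · exact ⟨⟨e, by rw [he, h2n]; ring⟩, ⟨f, by rw [hf, h2n]; ring⟩⟩
    · obtain ⟨a, ha⟩ := Int.exists_dvd_mul_mul_add_of_isCoprime (M := 2)
        (⟨1, -e, by ring⟩ : IsCoprime (2 * e + 1) 2) ⟨f, hf⟩
      rw [← h2n, ← he] at ha
      exact absurd ha (h a)

theorem Int.eq_two_of_forall_not_dvd_mul_geom_sum_add {p n : ℕ} (hp : p.Prime) (hn : 1 ≤ n)
    {s c : ℤ} (hs : (p : ℤ) ^ n ∣ s ^ p - 1) (hcs : (p : ℤ) ^ n ∣ c * (s - 1)) (hc : (p : ℤ) ∣ c)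
    (h : ∀ a : ℤ, ¬ (p : ℤ) ^ n ∣ a * ∑ i ∈ Finset.range p, s ^ i + c) :
    p = 2 ∧ (2 : ℤ) ^ n ∣ s + 1 ∧ (2 : ℤ) ^ n ∣ c - 2 ^ (n - 1) := by
  rcases hp.eq_two_or_odd' with rfl | hodd
  · push_cast at hs hcs hc h
    refine ⟨rfl, Int.two_pow_dvd_add_one_of_forall_not_dvd hn hs hcs hc fun a => ?_⟩
    simpa [Finset.sum_range_succ, add_comm] using h a
  · obtain ⟨a, ha⟩ := Int.exists_pow_dvd_mul_geom_sum_add_of_odd hodd hn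
      (Int.dvd_sub_one_of_dvd_pow_sub_one hp ((dvd_pow_self _ (by omega)).trans hs)) hc
    exact absurd ha (h a)

section Group

variable {G : Type*} [Group G] {p n : ℕ} {x w : G}

theorem pow_mul_zpow_mul_inv_pow {s : ℤ} (h : w * x * w⁻¹ = x ^ s) (j : ℕ) (k : ℤ) :
    w ^ j * x ^ k * (w ^ j)⁻¹ = x ^ (s ^ j * k) := by
  induction j generalizing k with
  | zero => simp
  | succ j ih =>
    calc w ^ (j + 1) * x ^ k * (w ^ (j + 1))⁻¹ = w * (w ^ j * x ^ k * (w ^ j)⁻¹) * w⁻¹ := by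
          rw [pow_succ']; group
      _ = x ^ (s ^ (j + 1) * k) := by
          rw [ih, ← conj_zpow, h, ← zpow_mul, pow_succ', mul_assoc]

theorem zpow_mul_pow_eq_zpow_geom_sum_mul_pow {s : ℤ} (h : w * x * w⁻¹ = x ^ s) (a : ℤ) (j : ℕ) :
    (x ^ a * w) ^ j = x ^ (a * ∑ i ∈ Finset.range j, s ^ i) * w ^ j := by
  induction j with
  | zero => simp
  | succ j ih =>
    have hswap : w ^ j * x ^ a = x ^ (s ^ j * a) * w ^ j := by
      rw [← pow_mul_zpow_mul_inv_pow h j a]; group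
    calc (x ^ a * w) ^ (j + 1)
        = x ^ (a * ∑ i ∈ Finset.range j, s ^ i) * (w ^ j * x ^ a) * w := by
          rw [pow_succ, ih]; group
      _ = x ^ (a * ∑ i ∈ Finset.range (j + 1), s ^ i) * w ^ (j + 1) := by
          rw [hswap, Finset.sum_range_succ, mul_add, zpow_add, pow_succ, mul_comm a]; group

theorem not_dvd_mul_geom_sum_add (hp : p.Prime) {s c : ℤ} (hs : w * x * w⁻¹ = x ^ s)
    (hc : w ^ p = x ^ c) (hwx : w ∉ zpowers x)
    (hord : ∀ g : G, orderOf g = p → g ∈ zpowers x) (a : ℤ) :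
    ¬ (orderOf x : ℤ) ∣ a * ∑ i ∈ Finset.range p, s ^ i + c := by
  have : Fact p.Prime := ⟨hp⟩
  intro hdvd
  have hax : x ^ a * w ∉ zpowers x := fun h =>
    hwx (by simpa using mul_mem (zpow_mem (mem_zpowers x) (-a)) h)
  refine hax (hord _ (orderOf_eq_prime_iff.mpr ⟨?_, fun h => hax (h ▸ one_mem _)⟩))
  rw [zpow_mul_pow_eq_zpow_geom_sum_mul_pow hs, hc, ← zpow_add]
  exact orderOf_dvd_iff_zpow_eq_one.mp hdvd

theorem prime_dvd_of_pow_prime_eq_zpow (hp : p.Prime) (hn : 1 ≤ n) (hx : orderOf x = p ^ n)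
    (hw : orderOf w ∣ p ^ n) {c : ℤ} (hc : w ^ p = x ^ c) : (p : ℤ) ∣ c := by
  have h1 : x ^ (c * (p ^ (n - 1) : ℕ)) = 1 := by
    rw [zpow_mul, ← hc, zpow_natCast, ← pow_mul, ← pow_succ', Nat.sub_add_cancel hn]
    exact orderOf_dvd_iff_pow_eq_one.mp hw
  have h2 := orderOf_dvd_iff_zpow_eq_one.mpr h1
  rw [hx, show p ^ n = p ^ (n - 1) * p by rw [← pow_succ, Nat.sub_add_cancel hn], mul_comm c]
    at h2
  push_cast at h2
  exact (mul_dvd_mul_iff_left (pow_ne_zero _ (by exact_mod_cast hp.ne_zero))).mp h2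

theorem eq_two_and_conj_eq_inv (hp : p.Prime) (hn : 2 ≤ n) (hx : orderOf x = p ^ n)
    (hw : orderOf w ∣ p ^ n) (hwN : w * x * w⁻¹ ∈ zpowers x) (hwx : w ∉ zpowers x)
    (hwp : w ^ p ∈ zpowers x) (hord : ∀ g : G, orderOf g = p → g ∈ zpowers x) :
    p = 2 ∧ w * x * w⁻¹ = x⁻¹ ∧ w ^ 2 = x ^ 2 ^ (n - 1) := by
  obtain ⟨s, hs⟩ := mem_zpowers_iff.mp hwN
  obtain ⟨c, hc⟩ := mem_zpowers_iff.mp hwp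
  have hzpow : ∀ a b : ℤ, x ^ a = x ^ b ↔ (p : ℤ) ^ n ∣ b - a := by
    intro a b
    rw [zpow_eq_zpow_iff_modEq, hx, Int.modEq_iff_dvd]
    push_cast
    rfl
  -- `w ^ p = x ^ c` commutes with both `x` and `w`
  have hsp : (p : ℤ) ^ n ∣ s ^ p - 1 := by
    refine (hzpow _ _).mp ?_
    rw [← mul_one (s ^ p), ← pow_mul_zpow_mul_inv_pow hs.symm, ← hc]
    group
  have hcs : (p : ℤ) ^ n ∣ c * (s - 1) := by
    have hconj := pow_mul_zpow_mul_inv_pow hs.symm 1 c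
    rw [pow_one, pow_one] at hconj
    rw [show c * (s - 1) = s * c - c by ring, ← hzpow, ← hconj, hc]
    group
  have hsolve := not_dvd_mul_geom_sum_add hp hs.symm hc.symm hwx hord
  rw [hx] at hsolve
  push_cast at hsolve
  obtain ⟨rfl, hs1, hc1⟩ := Int.eq_two_of_forall_not_dvd_mul_geom_sum_add hp (by omega) hsp hcs
    (prime_dvd_of_pow_prime_eq_zpow hp (by omega) hx hw hc.symm) hsolve
  refine ⟨rfl, ?_, ?_⟩
  · rw [← hs, ← zpow_neg_one, hzpow]
    simpa [sub_eq_add_neg, add_comm] using hs1.neg_right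
  · rw [← hc, ← zpow_natCast, hzpow]
    simpa using hc1.neg_right

end Group

section Quaternion

variable {G : Type*} [Group G]

theorem zpow_val_eq_zpow {m : ℕ} [NeZero m] {x : G} (hx : x ^ m = 1) {i : ZMod m} {k : ℤ}
    (hk : (k : ZMod m) = i) : x ^ (i.val : ℤ) = x ^ k := by
  subst hk
  rw [zpow_eq_zpow_iff_modEq]
  refine Int.ModEq.of_dvd (Int.natCast_dvd_natCast.mpr (orderOf_dvd_of_pow_eq_one hx)) ?_
  rw [← ZMod.intCast_eq_intCast_iff]
  simp

theorem zpow_mul_eq_mul_zpow_neg {x y : G} (h : y * x * y⁻¹ = x⁻¹) (k : ℤ) :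
    x ^ k * y = y * x ^ (-k) :=
  calc x ^ k * y = (y * x * y⁻¹) ^ (-k) * y := by rw [h, inv_zpow', neg_neg]
    _ = y * x ^ (-k) := by rw [conj_zpow]; group

namespace QuaternionGroup

variable {q : ℕ} [NeZero q] {x y : G}

def lift (hx : x ^ (2 * q) = 1) (hy2 : y ^ 2 = x ^ q) (hconj : y * x * y⁻¹ = x⁻¹) :
    QuaternionGroup q →* G :=
  MonoidHom.mk' (fun | a i => x ^ (i.val : ℤ) | xa i => y * x ^ (i.val : ℤ)) <| by
    rintro (i | i) (j | j)
    · simp only [a_mul_a]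
      rw [← zpow_add, zpow_val_eq_zpow hx (k := i.val + j.val) (by simp)]
    · simp only [a_mul_xa]
      rw [← mul_assoc, zpow_mul_eq_mul_zpow_neg hconj, mul_assoc, ← zpow_add,
        zpow_val_eq_zpow hx (k := -i.val + j.val) (by simp; ring)]
    · simp only [xa_mul_a]
      rw [mul_assoc, ← zpow_add, zpow_val_eq_zpow hx (k := i.val + j.val) (by simp)]
    · simp only [xa_mul_xa]
      rw [mul_assoc, ← mul_assoc (x ^ _), zpow_mul_eq_mul_zpow_neg hconj, ← mul_assoc,
        ← mul_assoc, ← pow_two, hy2, mul_assoc, ← zpow_add, ← zpow_natCast, ← zpow_add,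
        zpow_val_eq_zpow hx (k := q + (-i.val + j.val)) (by simp; ring)]

theorem nonempty_mulEquiv (hx : orderOf x = 2 * q) (hyx : y ∉ zpowers x) (hy2 : y ^ 2 = x ^ q)
    (hconj : y * x * y⁻¹ = x⁻¹) (hcover : ∀ g : G, g ∈ zpowers x ∨ g * y ∈ zpowers x) :
    Nonempty (QuaternionGroup q ≃* G) := by
  have hx1 : x ^ (2 * q) = 1 := hx ▸ pow_orderOf_eq_one x
  set φ := lift hx1 hy2 hconj
  have hinj : Function.Injective φ := by
    refine (injective_iff_map_eq_one φ).mpr ?_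
    rintro (i | i) h
    · change x ^ (i.val : ℤ) = 1 at h
      have hdvd := orderOf_dvd_iff_zpow_eq_one.mpr h
      rw [hx] at hdvd
      have hi : i = 0 := by simpa using (ZMod.intCast_zmod_eq_zero_iff_dvd _ _).mpr hdvd
      rw [hi, a_zero]
    · change y * x ^ (i.val : ℤ) = 1 at h
      refine absurd ?_ hyx
      rw [eq_inv_of_mul_eq_one_left h]
      exact inv_mem (zpow_mem (mem_zpowers x) _)
  have hxφ : x ∈ φ.range := ⟨a 1, (zpow_val_eq_zpow hx1 (k := 1) (by simp)).trans (zpow_one x)⟩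
  have hyφ : y ∈ φ.range := ⟨xa 0, by simp [φ, lift]⟩
  refine ⟨MulEquiv.ofBijective φ ⟨hinj, fun g => ?_⟩⟩
  rcases hcover g with hg | hg
  · exact zpowers_le.mpr hxφ hg
  · simpa using mul_mem (zpowers_le.mpr hxφ hg) (inv_mem hyφ)

end QuaternionGroup

end Quaternion

section Normalizer

variable {G : Type*} [Group G] {p n : ℕ} {x : G}

theorem IsPGroup.exists_pow_notMem_and_pow_prime_mem (hG : IsPGroup p G) {H : Subgroup G}
    {v : G} (hv : v ∉ H) : ∃ j : ℕ, v ^ p ^ j ∉ H ∧ (v ^ p ^ j) ^ p ∈ H := by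
  classical
  have hex : ∃ k, v ^ p ^ k ∈ H := let ⟨k, hk⟩ := hG v; ⟨k, hk ▸ one_mem H⟩
  have hpos : Nat.find hex ≠ 0 := fun h => hv (by simpa [h] using Nat.find_spec hex)
  refine ⟨Nat.find hex - 1, Nat.find_min hex (by omega), ?_⟩
  rw [← pow_mul, ← pow_succ, Nat.sub_add_cancel (Nat.pos_of_ne_zero hpos)]
  exact Nat.find_spec hex

theorem sq_mul_mul_inv_sq_ne_inv {v : G} (hx : 4 ∣ orderOf x) (hv : v * x * v⁻¹ ∈ zpowers x) :
    v ^ 2 * x * (v ^ 2)⁻¹ ≠ x⁻¹ := by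
  obtain ⟨t, ht⟩ := mem_zpowers_iff.mp hv
  intro h
  have h1 := pow_mul_zpow_mul_inv_pow ht.symm 2 1
  rw [zpow_one, h, ← zpow_neg_one, zpow_eq_zpow_iff_modEq] at h1
  have h4 : ((t ^ 2 * 1 - -1 : ℤ) : ZMod 4) = 0 :=
    (ZMod.intCast_zmod_eq_zero_iff_dvd _ 4).mpr ((Int.natCast_dvd_natCast.mpr hx).trans h1.dvd)
  push_cast [mul_one, sub_neg_eq_add] at h4
  -- `-1` is not a square modulo `4`
  exact (by decide : ∀ u : ZMod 4, u ^ 2 + 1 ≠ 0) _ h4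

theorem conj_mem_zpowers_of_mem_normalizer {v : G} (hv : v ∈ normalizer (zpowers x : Set G)) :
    v * x * v⁻¹ ∈ zpowers x :=
  (mem_normalizer_iff.mp hv x).mp (mem_zpowers x)

theorem eq_two_and_conj_eq_inv_of_mem_normalizer (hG : IsPGroup p G) (hp : p.Prime) (hn : 2 ≤ n)
    (hx : orderOf x = p ^ n) (hmax : ∀ g : G, orderOf g ∣ p ^ n)
    (hord : ∀ g : G, orderOf g = p → g ∈ zpowers x) {v : G}
    (hvN : v ∈ normalizer (zpowers x : Set G)) (hvx : v ∉ zpowers x) :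
    p = 2 ∧ v * x * v⁻¹ = x⁻¹ ∧ v ^ 2 = x ^ 2 ^ (n - 1) := by
  obtain ⟨j, hj, hjp⟩ := hG.exists_pow_notMem_and_pow_prime_mem hvx
  obtain ⟨rfl, hinv, -⟩ := eq_two_and_conj_eq_inv hp hn hx (hmax _)
    (conj_mem_zpowers_of_mem_normalizer (pow_mem hvN _)) hj hjp hord
  obtain _ | j := j
  · simp only [pow_zero, pow_one] at hjp
    exact eq_two_and_conj_eq_inv hp hn hx (hmax v) (conj_mem_zpowers_of_mem_normalizer hvN) hvx
      hjp hord
  · refine absurd ?_ (sq_mul_mul_inv_sq_ne_inv ?_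
      (conj_mem_zpowers_of_mem_normalizer (pow_mem hvN (2 ^ j))))
    · rwa [← pow_mul, ← pow_succ]
    · rw [hx]
      exact pow_dvd_pow 2 hn

theorem mem_zpowers_or_mul_mem_zpowers (hG : IsPGroup p G) (hp : p.Prime) (hn : 2 ≤ n)
    (hx : orderOf x = p ^ n) (hmax : ∀ g : G, orderOf g ∣ p ^ n)
    (hord : ∀ g : G, orderOf g = p → g ∈ zpowers x) {y v : G}
    (hyN : y ∈ normalizer (zpowers x : Set G)) (hyx : y ∉ zpowers x)
    (hvN : v ∈ normalizer (zpowers x : Set G)) : v ∈ zpowers x ∨ v * y ∈ zpowers x := by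
  by_contra! h
  obtain ⟨rfl, hy, -⟩ := eq_two_and_conj_eq_inv_of_mem_normalizer hG hp hn hx hmax hord hyN hyx
  obtain ⟨-, hv, -⟩ := eq_two_and_conj_eq_inv_of_mem_normalizer hG hp hn hx hmax hord hvN h.1
  obtain ⟨-, hvy, -⟩ :=
    eq_two_and_conj_eq_inv_of_mem_normalizer hG hp hn hx hmax hord (mul_mem hvN hyN) h.2
  have hinv : x⁻¹ = x :=
    calc x⁻¹ = v * (y * x * y⁻¹) * v⁻¹ := by rw [← hvy]; group
      _ = (v * x * v⁻¹)⁻¹ := by rw [hy]; group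
      _ = x := by rw [hv, inv_inv]
  have h2 : orderOf x ∣ 2 ^ 1 :=
    orderOf_dvd_of_pow_eq_one (by rw [pow_one, pow_two, ← inv_eq_iff_mul_eq_one, hinv])
  rw [hx, Nat.pow_dvd_pow_iff_le_right one_lt_two] at h2
  omega

theorem Subgroup.normal_of_forall_sq_mem {H : Subgroup G} (h : ∀ g : G, g ^ 2 ∈ H) : H.Normal where
  conj_mem a ha g := by
    have : g * a * g⁻¹ = (g * a) ^ 2 * a⁻¹ * (g ^ 2)⁻¹ := by simp only [sq]; group
    rw [this]
    exact mul_mem (mul_mem (h _) (inv_mem ha)) (inv_mem (h g))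

theorem normalizer_zpowers_eq_top_of_orderOf_dvd_four (hmax : ∀ g : G, orderOf g ∣ 4)
    (hord : ∀ g : G, orderOf g = 2 → g ∈ zpowers x) : normalizer (zpowers x : Set G) = ⊤ := by
  refine normalizer_eq_top_iff.mpr (Subgroup.normal_of_forall_sq_mem fun g => ?_)
  have : orderOf (g ^ 2) ∣ 2 := orderOf_dvd_of_pow_eq_one <| by
    rw [← pow_mul]
    exact orderOf_dvd_iff_pow_eq_one.mp (hmax g)
  rcases (Nat.dvd_prime Nat.prime_two).mp this with h | h
  · rw [orderOf_eq_one_iff.mp h]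
    exact one_mem _
  · exact hord _ h

theorem normalizer_normalizer_zpowers_le [Finite G]
    (h : ∀ v ∈ normalizer (zpowers x : Set G), orderOf v = orderOf x → v ∈ zpowers x) :
    normalizer (normalizer (zpowers x : Set G) : Set G) ≤ normalizer (zpowers x : Set G) := by
  intro w hw
  have hwx : w * x * w⁻¹ ∈ zpowers x :=
    h _ ((mem_normalizer_iff.mp hw x).mp (le_normalizer (mem_zpowers x)))
      (MulEquiv.orderOf_eq (MulAut.conj w) x)
  rw [mem_normalizer_iff_map_conj_eq, MonoidHom.map_zpowers]
  refine eq_of_le_of_card_ge (zpowers_le.mpr hwx) ?_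
  rw [Nat.card_zpowers, Nat.card_zpowers]
  exact (MulEquiv.orderOf_eq (MulAut.conj w) x).ge

theorem normalizer_zpowers_eq_top [Finite G] (hG : IsPGroup 2 G) (hn : 2 ≤ n)
    (hx : orderOf x = 2 ^ n) (hmax : ∀ g : G, orderOf g ∣ 2 ^ n)
    (hord : ∀ g : G, orderOf g = 2 → g ∈ zpowers x) : normalizer (zpowers x : Set G) = ⊤ := by
  rcases hn.eq_or_lt with rfl | hn3
  · exact normalizer_zpowers_eq_top_of_orderOf_dvd_four hmax hord
  -- for `n ≥ 3`, the elements of the normalizer outside `⟨x⟩` have order `4`, so no conjugate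
  -- of `x` lies among them
  have hle := normalizer_normalizer_zpowers_le (x := x) fun v hvN hv => by
    by_contra hvx
    obtain ⟨-, -, hv2⟩ :=
      eq_two_and_conj_eq_inv_of_mem_normalizer hG Nat.prime_two hn hx hmax hord hvN hvx
    have h4 : orderOf v ∣ 2 ^ 2 := orderOf_dvd_of_pow_eq_one <| by
      rw [show 2 ^ 2 = 2 * 2 from rfl, pow_mul, hv2, ← pow_mul, ← pow_succ,
        Nat.sub_add_cancel (by omega), ← hx, pow_orderOf_eq_one]
    rw [hv, hx, Nat.pow_dvd_pow_iff_le_right one_lt_two] at h4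
    omega
  have : Fact (Nat.Prime 2) := ⟨Nat.prime_two⟩
  have := hG.isNilpotent
  by_contra hne
  exact (Group.normalizerCondition_of_isNilpotent _ (lt_top_iff_ne_top.mpr hne)).not_ge hle

end Normalizer

section Classification

variable {G : Type*} [Group G] [Finite G] {p : ℕ}

theorem IsPGroup.exists_orderOf_eq_pow_forall_orderOf_dvd (hp : p.Prime) (hG : IsPGroup p G) :
    ∃ (x : G) (n : ℕ), orderOf x = p ^ n ∧ ∀ g : G, orderOf g ∣ p ^ n := by
  have : Fact p.Prime := ⟨hp⟩
  obtain ⟨x, hxmax⟩ := Finite.exists_max (orderOf : G → ℕ)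
  obtain ⟨n, hx⟩ := IsPGroup.iff_orderOf.mp hG x
  refine ⟨x, n, hx, fun g => ?_⟩
  obtain ⟨k, hk⟩ := IsPGroup.iff_orderOf.mp hG g
  rw [hk, Nat.pow_dvd_pow_iff_le_right hp.one_lt, ← Nat.pow_le_pow_iff_right hp.one_lt, ← hk, ← hx]
  exact hxmax g

theorem le_zpowers_of_forall_orderOf_eq_mem {Z : Subgroup G} (hZ : Nat.card Z = p)
    (hord : ∀ g : G, orderOf g = p → g ∈ Z) {x : G} (hpx : p ∣ orderOf x) : Z ≤ zpowers x := by
  have hz := orderOf_pow_orderOf_div (orderOf_pos x).ne' hpx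
  have hZz : zpowers (x ^ (orderOf x / p)) = Z :=
    eq_of_le_of_card_ge (zpowers_le.mpr (hord _ hz)) (by rw [Nat.card_zpowers, hz, hZ])
  exact hZz ▸ zpowers_le.mpr (pow_mem (mem_zpowers x) _)

theorem IsPGroup.isCyclic_or_nonempty_mulEquiv_quaternionGroup (hp : p.Prime) (hG : IsPGroup p G)
    {Z : Subgroup G} (hZ : Nat.card Z = p) (hord : ∀ g : G, orderOf g = p → g ∈ Z) :
    IsCyclic G ∨ ∃ n, 1 ≤ n ∧ Nonempty (QuaternionGroup (2 ^ n) ≃* G) := by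
  have : Fact p.Prime := ⟨hp⟩
  obtain ⟨x, n, hx, hmax⟩ := hG.exists_orderOf_eq_pow_forall_orderOf_dvd hp
  have hpx : p ∣ orderOf x := by
    obtain ⟨g, hg⟩ := exists_prime_orderOf_dvd_card' (G := G) p
      (hZ ▸ Subgroup.card_subgroup_dvd_card Z)
    exact hg ▸ hx ▸ hmax g
  have hordx : ∀ g : G, orderOf g = p → g ∈ zpowers x :=
    fun g hg => le_zpowers_of_forall_orderOf_eq_mem hZ hord hpx (hord g hg)
  by_cases htop : zpowers x = ⊤
  · exact .inl (isCyclic_iff_exists_zpowers_eq_top.mpr ⟨x, htop⟩)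
  have hn : 2 ≤ n := by
    refine not_lt.mp fun hn => htop (eq_top_iff.mpr fun g _ => ?_)
    rcases (Nat.dvd_prime hp).mp ((hmax g).trans ((pow_dvd_pow p (by omega)).trans (pow_one p).dvd))
      with h | h
    · exact orderOf_eq_one_iff.mp h ▸ one_mem _
    · exact hordx g h
  have := hG.isNilpotent
  obtain ⟨y, hyN, hyx⟩ := SetLike.exists_of_lt
    (Group.normalizerCondition_of_isNilpotent _ (lt_top_iff_ne_top.mpr htop))
  obtain ⟨rfl, hy, hy2⟩ := eq_two_and_conj_eq_inv_of_mem_normalizer hG hp hn hx hmax hordx hyN hyx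
  have hN := normalizer_zpowers_eq_top hG hn hx hmax hordx
  refine .inr ⟨n - 1, by omega, QuaternionGroup.nonempty_mulEquiv ?_ hyx hy2 hy fun g =>
    mem_zpowers_or_mul_mem_zpowers hG hp hn hx hmax hordx hyN hyx (hN ▸ mem_top g)⟩
  rw [hx, ← pow_succ', Nat.sub_add_cancel (by omega)]

end Classification

section Forcing

variable {G : Type*} [Group G] {p : ℕ} {Z : Subgroup G}

theorem orderOf_eq_of_mk_isConj (hp : p.Prime) (hZc : Z ≤ center G) [Z.Normal]
    (hZ : Nat.card Z = p) {x : G} (hx : orderOf x = p) (hxZ : x ∉ Z) {g : G}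
    (hg : IsConj (x : G ⧸ Z) g) : orderOf g = p := by
  have : Fact p.Prime := ⟨hp⟩
  obtain ⟨u, hu⟩ := isConj_iff.mp hg
  obtain ⟨u, rfl⟩ := QuotientGroup.mk_surjective u
  set z := g * (u * x * u⁻¹)⁻¹
  have hz : z ∈ Z := by
    rw [← QuotientGroup.eq_one_iff, QuotientGroup.mk_mul, QuotientGroup.mk_inv, ← hu]
    simp
  have hzp : z ^ p = 1 := by
    simpa [hZ] using congrArg Subtype.val (pow_card_eq_one' (G := Z) (x := ⟨z, hz⟩))
  have hgz : g = z * (u * x * u⁻¹) := by simp only [z]; group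
  have hcomm : Commute z (u * x * u⁻¹) := ((mem_center_iff.mp (hZc hz)) _).symm
  refine orderOf_eq_prime ?_ fun h => hxZ ?_
  · rw [hgz, hcomm.mul_pow, hzp, conj_pow, ← hx, pow_orderOf_eq_one]
    group
  · rw [h, QuotientGroup.mk_one, mul_inv_eq_one, mul_eq_left] at hu
    exact (QuotientGroup.eq_one_iff x).mp hu

theorem isForcingExtension_mk' (hp : p.Prime) (hZc : Z ≤ center G) [Z.Normal]
    (hZ : Nat.card Z = p) {x : G} (hx : orderOf x = p) (hxZ : x ∉ Z) :
    IsForcingExtension (QuotientGroup.mk' Z) := by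
  have : Fact p.Prime := ⟨hp⟩
  have hxo : orderOf (x : G ⧸ Z) = p := orderOf_eq_prime
    (by rw [← QuotientGroup.mk_pow, ← hx, pow_orderOf_eq_one, QuotientGroup.mk_one])
    (by rwa [Ne, QuotientGroup.eq_one_iff])
  refine ⟨QuotientGroup.mk'_surjective Z, x, fun c hc g hg => ?_⟩
  obtain ⟨u, rfl⟩ := isConj_iff.mp hc
  rw [← MulAut.conj_apply, MulEquiv.orderOf_eq, hxo]
  exact orderOf_eq_of_mk_isConj hp hZc hZ hx hxZ (isConj_iff.mpr ⟨u, hg.symm⟩)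

end Forcing

/-- If `G̃` is a finite non-cyclic, non-(generalized-)quaternion `p`-group and
`Z` is a central subgroup of order `p`, then the quotient map `G̃ → G̃/Z` is a forcing
extension. -/
theorem forcing_of_central_quotient (p : ℕ) (hp : p.Prime)
    (G' : Type) [Group G'] [Finite G'] (hpG : IsPGroup p G') (hnc : ¬ IsCyclic G')
    (hnq : ∀ n : ℕ, 1 ≤ n → IsEmpty (G' ≃* QuaternionGroup (2 ^ n)))
    (Z : Subgroup G') (hZcard : Nat.card Z = p) (hZcent : Z ≤ Subgroup.center G') :
    @IsForcingExtension G' (G' ⧸ Z) _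
      (@QuotientGroup.Quotient.group G' _ Z (normal_of_le_center hZcent))
      (@QuotientGroup.mk' G' _ Z (normal_of_le_center hZcent)) := by
  have := normal_of_le_center hZcent
  obtain ⟨x, hx, hxZ⟩ : ∃ x : G', orderOf x = p ∧ x ∉ Z := by
    by_contra! hord
    rcases hpG.isCyclic_or_nonempty_mulEquiv_quaternionGroup hp hZcard hord with hcyc | ⟨n, hn, ⟨e⟩⟩
    · exact hnc hcyc
    · exact (hnq n hn).false e.symm
  exact isForcingExtension_mk' hp hZcent hZcard hx hxZ
end

section
/- Let n ≥ 1 and let Q = Q(n) be the generalized quaternion group of order 2^{n+2}, with x its distinguished element of order 2^{n+1}. Then for every 1 ≤ k ≤ n + 1, the k-th term G_k of the lower exponent-2 central series of Q equals the cyclic subgroup generated by x^{2^k}. In particular G_{n+1} = {e} and G_n ≠ {e}, so the 2-class of Q(n) is n + 1. -/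
/-- The lower exponent-`p` central series of a group: `G₀ = G` and
`G_{j+1} = G_j^p [G_j, G]`, the subgroup generated by `p`-th powers of elements of `G_j`
together with commutators of elements of `G_j` with elements of `G`. -/
def lowerExpPSeries (p : ℕ) (G : Type*) [Group G] : ℕ → Subgroup G
  | 0 => ⊤
  | j + 1 => Subgroup.closure {x : G | ∃ g ∈ lowerExpPSeries p G j, x = g ^ p} ⊔
      ⁅lowerExpPSeries p G j, (⊤ : Subgroup G)⁆

/-!
Every square and every commutator of `Q(m)`, `m` even, lies in `⟨x²⟩`, so `G₁ = ⟨x²⟩`.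
Inside the cyclic subgroup `⟨x⟩` a commutator `[y, h]` is either `1` or `y²`, so once `G_j = ⟨g⟩`
with `g ∈ ⟨x⟩` the next term is generated by the squares alone: `G_{j+1} = ⟨g²⟩`. Hence
`G_k = ⟨x^(2^k)⟩`, which is trivial exactly when the order `2^(n+1)` of `x` divides `2^k`.
-/

open Subgroup
open scoped commutatorElement

section LowerExpPSeries

variable {G : Type*} [Group G] {p : ℕ}

theorem pow_mem_zpowers_pow {g y : G} (hy : y ∈ zpowers g) : y ^ p ∈ zpowers (g ^ p) := by
  obtain ⟨z, rfl⟩ := hy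
  exact ⟨z, by simp only [← zpow_natCast, ← zpow_mul, mul_comm]⟩

theorem lowerExpPSeries_succ_eq_zpowers_pow {g : G} {j : ℕ}
    (hj : lowerExpPSeries p G j = zpowers g)
    (hcomm : ∀ y ∈ zpowers g, ∀ h : G, ⁅y, h⁆ ∈ zpowers (y ^ p)) :
    lowerExpPSeries p G (j + 1) = zpowers (g ^ p) := by
  rw [lowerExpPSeries, hj]
  refine le_antisymm (sup_le ?_ ?_) ?_
  · rw [closure_le]
    rintro _ ⟨y, hy, rfl⟩
    exact pow_mem_zpowers_pow hy
  · rw [commutator_le]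
    rintro y hy h -
    exact zpowers_le.2 (pow_mem_zpowers_pow hy) (hcomm y hy h)
  · exact zpowers_le.2 (mem_sup_left (subset_closure ⟨g, mem_zpowers g, rfl⟩))

theorem lowerExpPSeries_add_eq_zpowers_pow {g : G} {j : ℕ}
    (hj : lowerExpPSeries p G j = zpowers g)
    (hcomm : ∀ y ∈ zpowers g, ∀ h : G, ⁅y, h⁆ ∈ zpowers (y ^ p)) (k : ℕ) :
    lowerExpPSeries p G (j + k) = zpowers (g ^ p ^ k) := by
  induction k with
  | zero => simpa using hj
  | succ k ih =>
    rw [pow_succ, pow_mul]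
    refine lowerExpPSeries_succ_eq_zpowers_pow ih fun y hy ↦ hcomm y ?_
    exact zpowers_le.2 (pow_mem (mem_zpowers g) _) hy

end LowerExpPSeries

theorem ZMod.two_mul_natCast_self (m : ℕ) : (2 * m : ZMod (2 * m)) = 0 := by
  exact_mod_cast ZMod.natCast_self (2 * m)

namespace QuaternionGroup

variable {m : ℕ}

theorem a_inv (i : ZMod (2 * m)) : (a i : QuaternionGroup m)⁻¹ = a (-i) := rfl

theorem xa_inv (i : ZMod (2 * m)) : (xa i : QuaternionGroup m)⁻¹ = xa ((m : ZMod (2 * m)) + i) :=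
  rfl

theorem a_one_zpow (z : ℤ) : (a 1 : QuaternionGroup m) ^ z = a z := by
  cases z with
  | ofNat k => simp
  | negSucc k => simp [zpow_negSucc, a_inv]

theorem a_mem_zpowers_a_one (i : ZMod (2 * m)) : a i ∈ zpowers (a 1 : QuaternionGroup m) :=
  ⟨ZMod.cast i, by simp only [a_one_zpow, ZMod.intCast_zmod_cast]⟩

theorem commutatorElement_a_a (i j : ZMod (2 * m)) : ⁅(a i : QuaternionGroup m), a j⁆ = 1 := by
  simp [commutatorElement_def, a_inv]

theorem commutatorElement_a_xa (i j : ZMod (2 * m)) :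
    ⁅(a i : QuaternionGroup m), xa j⁆ = a i ^ 2 := by
  simp only [commutatorElement_def, a_inv, xa_inv, a_mul_xa, xa_mul_a, xa_mul_xa, sq, a_mul_a,
    a.injEq]
  linear_combination ZMod.two_mul_natCast_self m

theorem commutatorElement_xa_a (i j : ZMod (2 * m)) :
    ⁅(xa i : QuaternionGroup m), a j⁆ = (a j ^ 2)⁻¹ := by
  simp only [commutatorElement_def, a_inv, xa_inv, xa_mul_a, xa_mul_xa, a_mul_a, sq, a.injEq]
  linear_combination ZMod.two_mul_natCast_self m

theorem commutatorElement_xa_xa (i j : ZMod (2 * m)) :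
    ⁅(xa i : QuaternionGroup m), xa j⁆ = a (j - i) ^ 2 := by
  simp only [commutatorElement_def, xa_inv, a_mul_xa, xa_mul_xa, sq, a_mul_a, a.injEq]
  linear_combination ZMod.two_mul_natCast_self m

theorem commutatorElement_a_mem_zpowers_sq (i : ZMod (2 * m)) (h : QuaternionGroup m) :
    ⁅a i, h⁆ ∈ zpowers (a i ^ 2) := by
  cases h with
  | a j => rw [commutatorElement_a_a]; exact one_mem _
  | xa j => rw [commutatorElement_a_xa]; exact mem_zpowers _

theorem commutatorElement_mem_zpowers_sq_of_mem_zpowers_a_one {y : QuaternionGroup m}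
    (hy : y ∈ zpowers (a 1)) (h : QuaternionGroup m) : ⁅y, h⁆ ∈ zpowers (y ^ 2) := by
  obtain ⟨z, rfl⟩ := hy
  simpa only [a_one_zpow] using commutatorElement_a_mem_zpowers_sq (z : ZMod (2 * m)) h

theorem a_sq_mem_zpowers_a_one_sq (i : ZMod (2 * m)) :
    (a i : QuaternionGroup m) ^ 2 ∈ zpowers (a 1 ^ 2) :=
  pow_mem_zpowers_pow (a_mem_zpowers_a_one i)

theorem sq_mem_zpowers_a_one_sq (hm : Even m) (g : QuaternionGroup m) :
    g ^ 2 ∈ zpowers (a 1 ^ 2) := by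
  cases g with
  | a i => exact a_sq_mem_zpowers_a_one_sq i
  | xa i =>
    obtain ⟨k, rfl⟩ := hm.two_dvd
    rw [xa_sq, ← a_one_pow, pow_mul]
    exact pow_mem (mem_zpowers _) k

theorem commutatorElement_mem_zpowers_a_one_sq (g h : QuaternionGroup m) :
    ⁅g, h⁆ ∈ zpowers (a 1 ^ 2) := by
  cases g with
  | a i =>
    exact zpowers_le.2 (a_sq_mem_zpowers_a_one_sq i) (commutatorElement_a_mem_zpowers_sq i h)
  | xa i =>
    cases h with
    | a j => rw [commutatorElement_xa_a]; exact inv_mem (a_sq_mem_zpowers_a_one_sq j)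
    | xa j => rw [commutatorElement_xa_xa]; exact a_sq_mem_zpowers_a_one_sq _

theorem lowerExpPSeries_one (hm : Even m) :
    lowerExpPSeries 2 (QuaternionGroup m) 1 = zpowers (a 1 ^ 2) := by
  rw [lowerExpPSeries, lowerExpPSeries]
  refine le_antisymm (sup_le ?_ ?_) ?_
  · rw [closure_le]
    rintro _ ⟨g, -, rfl⟩
    exact sq_mem_zpowers_a_one_sq hm g
  · rw [commutator_le]
    rintro g - h -
    exact commutatorElement_mem_zpowers_a_one_sq g h
  · exact zpowers_le.2 (mem_sup_left (subset_closure ⟨a 1, mem_top _, rfl⟩))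

theorem lowerExpPSeries_eq_zpowers (hm : Even m) {k : ℕ} (hk : 1 ≤ k) :
    lowerExpPSeries 2 (QuaternionGroup m) k = zpowers (a 1 ^ 2 ^ k) := by
  obtain ⟨k, rfl⟩ := Nat.exists_eq_add_of_le hk
  rw [pow_add, pow_one, pow_mul]
  refine lowerExpPSeries_add_eq_zpowers_pow (lowerExpPSeries_one hm) (fun y hy ↦ ?_) k
  exact commutatorElement_mem_zpowers_sq_of_mem_zpowers_a_one
    (zpowers_le.2 (pow_mem (mem_zpowers _) 2) hy)

theorem lowerExpPSeries_two_pow_eq_bot_iff {n : ℕ} (hn : 1 ≤ n) (c : ℕ) :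
    lowerExpPSeries 2 (QuaternionGroup (2 ^ n)) c = ⊥ ↔ n + 1 ≤ c := by
  rcases Nat.eq_zero_or_pos c with rfl | hc
  · simp [lowerExpPSeries]
  rw [lowerExpPSeries_eq_zpowers (Nat.even_pow.2 ⟨even_two, by omega⟩) hc, zpowers_eq_bot,
    ← orderOf_dvd_iff_pow_eq_one, orderOf_a_one, ← pow_succ',
    Nat.pow_dvd_pow_iff_le_right one_lt_two]

end QuaternionGroup

/-- For the generalized quaternion group `Q(n)` of order `2^(n+2)` (that is,
`QuaternionGroup (2^n)`), with `x = a 1` its distinguished element of order `2^(n+1)`, the `k`-th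
term of the lower exponent-`2` central series equals `⟨x^(2^k)⟩` for `1 ≤ k ≤ n+1`; in
particular the series reaches the trivial group exactly at step `n+1`, i.e. the `2`-class of
`Q(n)` is `n+1`. -/
theorem lowerExpPSeries_quaternion (n : ℕ) (hn : 1 ≤ n) :
    (∀ k : ℕ, 1 ≤ k → k ≤ n + 1 →
      lowerExpPSeries 2 (QuaternionGroup (2 ^ n)) k =
        Subgroup.zpowers ((QuaternionGroup.a 1 : QuaternionGroup (2 ^ n)) ^ (2 ^ k))) ∧
    lowerExpPSeries 2 (QuaternionGroup (2 ^ n)) (n + 1) = ⊥ ∧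
    lowerExpPSeries 2 (QuaternionGroup (2 ^ n)) n ≠ ⊥ ∧
    IsLeast {c : ℕ | lowerExpPSeries 2 (QuaternionGroup (2 ^ n)) c = ⊥} (n + 1) := by
  have hbot := QuaternionGroup.lowerExpPSeries_two_pow_eq_bot_iff hn
  refine ⟨fun k hk _ ↦ ?_, (hbot _).2 le_rfl, fun h ↦ ?_, (hbot _).2 le_rfl,
    fun c hc ↦ (hbot c).1 hc⟩
  · exact QuaternionGroup.lowerExpPSeries_eq_zpowers (Nat.even_pow.2 ⟨even_two, by omega⟩) hk
  · simpa using (hbot n).1 h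
end

section
/- For every n ≥ 1, the quotient map π : Q(n) → Q(n)/Z(Q(n)) is not a forcing extension: for every conjugacy class C of Q(n)/Z(Q(n)) there exist c ∈ C and g ∈ π^{-1}(c) such that the order of g differs from the order of c. -/
theorem ZMod.natCast_add_self_eq_zero (n : ℕ) : (n : ZMod (2 * n)) + n = 0 := by
  rw [← two_mul]; exact_mod_cast ZMod.natCast_self (2 * n)

namespace QuaternionGroup

variable {n : ℕ}

theorem a_mem_center {i : ZMod (2 * n)} (hi : i + i = 0) :
    a i ∈ Subgroup.center (QuaternionGroup n) := by
  rw [Subgroup.mem_center_iff]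
  rintro (j | j)
  · simp only [a_mul_a, add_comm]
  · simp only [a_mul_xa, xa_mul_a, xa.injEq]
    linear_combination hi

theorem a_n_ne_one [NeZero n] : (a n : QuaternionGroup n) ≠ 1 := by
  rw [one_def, Ne, a.injEq, ZMod.natCast_eq_zero_iff]
  have hn := Nat.pos_of_neZero n
  exact Nat.not_dvd_of_pos_of_lt hn (by omega)

theorem orderOf_a_n [NeZero n] : orderOf (a n : QuaternionGroup n) = 2 :=
  orderOf_eq_prime (by rw [sq, a_mul_a, ZMod.natCast_add_self_eq_zero, a_zero]) a_n_ne_one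

theorem mem_center_of_sq_eq_one [NeZero n] {g : QuaternionGroup n} (hg : g ^ 2 = 1) :
    g ∈ Subgroup.center (QuaternionGroup n) := by
  rcases g with i | i
  · rw [sq, a_mul_a, one_def, a.injEq] at hg
    exact a_mem_center hg
  · exact absurd (xa_sq i ▸ hg) a_n_ne_one

end QuaternionGroup

section

variable {G : Type*} [Group G] {H : Subgroup G} [H.Normal]

theorem orderOf_mk_ne_of_even {g : G} (hH : ∀ x : G, x ^ 2 = 1 → x ∈ H) (hg : IsOfFinOrder g)
    (h2 : 2 ∣ orderOf g) : orderOf (g : G ⧸ H) ≠ orderOf g := by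
  obtain ⟨k, hk⟩ := h2
  have hk0 : 0 < k := by have := hg.orderOf_pos; omega
  have hgk : (g : G ⧸ H) ^ k = 1 := by
    rw [← QuotientGroup.mk_pow, QuotientGroup.eq_one_iff]
    exact hH _ (by rw [← pow_mul, mul_comm, ← hk, pow_orderOf_eq_one])
  have := Nat.le_of_dvd hk0 (orderOf_dvd_of_pow_eq_one hgk)
  omega

theorem exists_mk_eq_and_orderOf_ne [Finite G] {z : G} (hz : z ∈ Subgroup.center G)
    (hz2 : orderOf z = 2) (hH : ∀ x : G, x ^ 2 = 1 → x ∈ H) (c : G ⧸ H) :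
    ∃ g : G, (g : G ⧸ H) = c ∧ orderOf g ≠ orderOf c := by
  obtain ⟨g, rfl⟩ := QuotientGroup.mk_surjective c
  by_cases heven : 2 ∣ orderOf g
  · exact ⟨g, rfl, (orderOf_mk_ne_of_even hH (isOfFinOrder_of_finite g) heven).symm⟩
  have hzH : z ∈ H := hH z (hz2 ▸ pow_orderOf_eq_one z)
  have hmk : ((g * z : G) : G ⧸ H) = g := by
    rw [QuotientGroup.mk_mul, (QuotientGroup.eq_one_iff z).mpr hzH, mul_one]
  refine ⟨g * z, hmk, fun h =>
    orderOf_mk_ne_of_even hH (isOfFinOrder_of_finite _) ?_ (hmk ▸ h.symm)⟩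
  have hcomm : Commute g z := Subgroup.mem_center_iff.mp hz g
  rw [hcomm.orderOf_mul_eq_mul_orderOf_of_coprime, hz2]
  · exact dvd_mul_left 2 _
  · rw [hz2, Nat.coprime_two_right]; exact Nat.odd_iff.mpr (Nat.two_dvd_ne_zero.mp heven)

end

theorem quaternion_quotient_not_forcing_general (n : ℕ) :
    ¬ IsForcingExtension
        (QuotientGroup.mk' (Subgroup.center (QuaternionGroup (2 ^ n)))) ∧
      ∀ c₀ : QuaternionGroup (2 ^ n) ⧸ Subgroup.center (QuaternionGroup (2 ^ n)),
        ∃ c, IsConj c₀ c ∧ ∃ g : QuaternionGroup (2 ^ n),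
          QuotientGroup.mk' (Subgroup.center (QuaternionGroup (2 ^ n))) g = c ∧
            orderOf g ≠ orderOf c := by
  open QuaternionGroup in
  have key (c : QuaternionGroup (2 ^ n) ⧸ Subgroup.center (QuaternionGroup (2 ^ n))) :
      ∃ g, QuotientGroup.mk' _ g = c ∧ orderOf g ≠ orderOf c :=
    exists_mk_eq_and_orderOf_ne (a_mem_center (ZMod.natCast_add_self_eq_zero _)) orderOf_a_n
      (fun _ => mem_center_of_sq_eq_one) c
  refine ⟨fun ⟨_, c₀, hforce⟩ => ?_, fun c₀ => ⟨c₀, .refl _, key c₀⟩⟩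
  obtain ⟨g, hg, hne⟩ := key c₀
  exact hne (hforce c₀ (.refl _) g hg)

/-- For every `n ≥ 1`, the quotient map `π : Q(n) → Q(n)/Z(Q(n))` is not a
forcing extension: for every conjugacy class of `Q(n)/Z(Q(n))` there exist an element `c` of the
class and a preimage `g ∈ π⁻¹(c)` whose order differs from that of `c`. -/
theorem quaternion_quotient_not_forcing (n : ℕ) (hn : 1 ≤ n) :
    ¬ IsForcingExtension
        (QuotientGroup.mk' (Subgroup.center (QuaternionGroup (2 ^ n)))) ∧
      ∀ c₀ : QuaternionGroup (2 ^ n) ⧸ Subgroup.center (QuaternionGroup (2 ^ n)),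
        ∃ c, IsConj c₀ c ∧ ∃ g : QuaternionGroup (2 ^ n),
          QuotientGroup.mk' (Subgroup.center (QuaternionGroup (2 ^ n))) g = c ∧
            orderOf g ≠ orderOf c :=
  quaternion_quotient_not_forcing_general n
end

section
/- Let L be a number field containing two subfields L₁ and L₂, with [L₁ : ℚ] = n and [L₂ : ℚ] = m, such that L is the compositum of L₁ and L₂ and [L : ℚ] = n·m (i.e., L₁ and L₂ are linearly disjoint over ℚ). Then Disc(L₁)^m · Disc(L₂)^n ≥ Disc(L), where Disc denotes the absolute value of the absolute discriminant. -/
/-!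
By linear disjointness `L₁ ⊗[ℚ] L₂ ≃ L`, so the products `aᵢ bⱼ` of integral bases of `L₁` and
`L₂` form a `ℚ`-basis of `L`. Its trace matrix is the Kronecker product of the two trace matrices,
so its discriminant is `Disc(L₁)^m · Disc(L₂)^n`. As the basis consists of algebraic integers,
this discriminant is `det(P)² · Disc(L)` for an integral change-of-basis matrix `P`, and `det P` is
a nonzero integer.
-/

open NumberField Module Matrix
open scoped TensorProduct

section TensorProduct

variable {R A B : Type*} [CommRing R] [CommRing A] [CommRing B] [Algebra R A] [Algebra R B]

theorem Algebra.trace_tmul [Module.Free R A] [Module.Finite R A] [Module.Free R B]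
    [Module.Finite R B] (a : A) (b : B) :
    Algebra.trace R (A ⊗[R] B) (a ⊗ₜ b) = Algebra.trace R A a * Algebra.trace R B b := by
  have hlmul : Algebra.lmul R (A ⊗[R] B) (a ⊗ₜ b) =
      _root_.TensorProduct.map (Algebra.lmul R A a) (Algebra.lmul R B b) := by
    apply _root_.TensorProduct.ext'
    intro x y
    simp [Algebra.TensorProduct.tmul_mul_tmul]
  simp only [Algebra.trace_apply, hlmul, LinearMap.trace_tensorProduct']

variable {ι κ : Type*} [Fintype ι] [Fintype κ]

theorem Algebra.traceMatrix_basis_tensorProduct (b : Basis ι R A) (c : Basis κ R B) :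
    Algebra.traceMatrix R (b.tensorProduct c) =
      kroneckerMap (· * ·) (Algebra.traceMatrix R b) (Algebra.traceMatrix R c) := by
  have := Module.Free.of_basis b
  have := Module.Finite.of_basis b
  have := Module.Free.of_basis c
  have := Module.Finite.of_basis c
  ext ⟨i, j⟩ ⟨k, l⟩
  simp only [traceMatrix_apply, Basis.tensorProduct_apply, traceForm_apply,
    Algebra.TensorProduct.tmul_mul_tmul, trace_tmul, kroneckerMap_apply]

theorem Algebra.discr_basis_tensorProduct [DecidableEq ι] [DecidableEq κ]
    (b : Basis ι R A) (c : Basis κ R B) :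
    Algebra.discr R (b.tensorProduct c) =
      Algebra.discr R b ^ Fintype.card κ * Algebra.discr R c ^ Fintype.card ι := by
  rw [Algebra.discr_def, Algebra.traceMatrix_basis_tensorProduct, det_kronecker,
    ← Algebra.discr_def, ← Algebra.discr_def]

end TensorProduct

namespace IntermediateField.LinearDisjoint

variable {F E : Type*} [Field F] [Field E] [Algebra F E] {A B : IntermediateField F E}
  [FiniteDimensional F A]

noncomputable def tensorEquiv (H : A.LinearDisjoint B) (H' : A ⊔ B = ⊤) :
    A ⊗[F] B ≃ₐ[F] E :=
  ((linearDisjoint_iff'.1 H).mulMapLeftOfSupEqTop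
    (by rw [← sup_toSubalgebra_of_left, H', top_toSubalgebra])).restrictScalars F

theorem tensorEquiv_tmul (H : A.LinearDisjoint B) (H' : A ⊔ B = ⊤) (a : A) (b : B) :
    H.tensorEquiv H' (a ⊗ₜ b) = a * b := rfl

variable {ι κ : Type*}

noncomputable def basisMul (H : A.LinearDisjoint B) (H' : A ⊔ B = ⊤) (a : Basis κ F A)
    (b : Basis ι F B) : Basis (κ × ι) F E :=
  (a.tensorProduct b).map (H.tensorEquiv H').toLinearEquiv

theorem basisMul_apply (H : A.LinearDisjoint B) (H' : A ⊔ B = ⊤) (a : Basis κ F A)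
    (b : Basis ι F B) (i : κ) (j : ι) : H.basisMul H' a b (i, j) = a i * b j := by
  simp only [basisMul, Basis.map_apply, Basis.tensorProduct_apply,
    AlgEquiv.toLinearEquiv_apply, tensorEquiv_tmul]

theorem discr_basisMul [Fintype ι] [Fintype κ] [DecidableEq ι] [DecidableEq κ]
    (H : A.LinearDisjoint B) (H' : A ⊔ B = ⊤) (a : Basis κ F A) (b : Basis ι F B) :
    Algebra.discr F (H.basisMul H' a b) =
      Algebra.discr F a ^ Fintype.card ι * Algebra.discr F b ^ Fintype.card κ := by
  change Algebra.discr F (H.tensorEquiv H' ∘ a.tensorProduct b) = _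
  rw [← Algebra.discr_eq_discr_of_algEquiv (a.tensorProduct b) (H.tensorEquiv H'),
    Algebra.discr_basis_tensorProduct]

end IntermediateField.LinearDisjoint

namespace NumberField

variable {K : Type*} [Field K] [NumberField K] {ι : Type*} [Fintype ι] [DecidableEq ι]

theorem isIntegral_integralBasis (i : Free.ChooseBasisIndex ℤ (𝓞 K)) :
    IsIntegral ℤ (integralBasis K i) := by
  rw [integralBasis_apply]
  exact RingOfIntegers.isIntegral_coe _

theorem exists_discr_eq_sq_mul_discr_of_isIntegral (b : Basis ι ℚ K)
    (hb : ∀ i, IsIntegral ℤ (b i)) : ∃ r : ℤ, Algebra.discr ℚ b = r ^ 2 * discr K := by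
  let b₀ := (integralBasis K).reindex ((integralBasis K).indexEquiv b)
  have hP : ∀ i j, IsIntegral ℤ (b₀.toMatrix b i j) := by
    intro i j
    obtain ⟨x, hx⟩ : ∃ x : 𝓞 K, algebraMap (𝓞 K) K x = b j := ⟨⟨b j, hb j⟩, rfl⟩
    rw [Basis.toMatrix_apply, ← hx, Basis.repr_reindex_apply, integralBasis_repr_apply]
    exact isIntegral_algebraMap
  obtain ⟨r, hr⟩ := IsIntegrallyClosed.isIntegral_iff.1 (IsIntegral.det hP)
  refine ⟨r, ?_⟩
  rw [← b₀.toMatrix_map_vecMul b, Algebra.discr_of_matrix_vecMul, Basis.coe_reindex,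
    Algebra.discr_reindex, ← coe_discr, ← hr, eq_intCast]

theorem abs_discr_le_of_isIntegral (b : Basis ι ℚ K) (hb : ∀ i, IsIntegral ℤ (b i)) {d : ℤ}
    (hd : Algebra.discr ℚ b = d) : |discr K| ≤ |d| := by
  obtain ⟨r, hr⟩ := exists_discr_eq_sq_mul_discr_of_isIntegral b hb
  have hdr : d = r ^ 2 * discr K := by exact_mod_cast hd.symm.trans hr
  have hr0 : r ≠ 0 := by
    rintro rfl
    exact Algebra.discr_not_zero_of_basis ℚ b (by simp [hr])
  calc |discr K| ≤ r ^ 2 * |discr K| :=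
        le_mul_of_one_le_left (abs_nonneg _) ((one_le_sq_iff_one_le_abs r).2 (Int.one_le_abs hr0))
    _ = |d| := by rw [hdr, abs_mul, abs_sq]

end NumberField

open IntermediateField.LinearDisjoint in
/-- If a number field `L` is the compositum of subfields `L₁`, `L₂` of degrees
`n`, `m` over `ℚ` with `[L : ℚ] = n·m` (linear disjointness), then
`Disc(L₁)^m · Disc(L₂)^n ≥ Disc(L)` (absolute values of discriminants). -/
theorem discr_compositum_bound (L : Type) [Field L] [NumberField L]
    (L₁ L₂ : IntermediateField ℚ L) (n m : ℕ)
    (hn : Module.finrank ℚ L₁ = n) (hm : Module.finrank ℚ L₂ = m)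
    (hcomp : L₁ ⊔ L₂ = ⊤) (hdeg : Module.finrank ℚ L = n * m) :
    |discr L| ≤ |discr L₁| ^ m * |discr L₂| ^ n := by
  subst hn hm
  have hld : L₁.LinearDisjoint L₂ :=
    .of_finrank_sup (by rw [hcomp, IntermediateField.finrank_top', hdeg])
  let b := hld.basisMul hcomp (integralBasis L₁) (integralBasis L₂)
  have hint : ∀ i, IsIntegral ℤ (b i) := fun ⟨i, j⟩ => by
    rw [show b (i, j) = _ from basisMul_apply ..]
    exact (isIntegral_integralBasis i).algebraMap.mul (isIntegral_integralBasis j).algebraMap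
  have hdisc : Algebra.discr ℚ b =
      ((discr L₁ ^ finrank ℚ L₂ * discr L₂ ^ finrank ℚ L₁ : ℤ) : ℚ) := by
    rw [show Algebra.discr ℚ b = _ from discr_basisMul .., Int.cast_mul, Int.cast_pow,
      Int.cast_pow, coe_discr, coe_discr, finrank_eq_card_basis (integralBasis L₁),
      finrank_eq_card_basis (integralBasis L₂)]
    -- the sides differ in the `ℚ`-algebra structure on `L₁`, `L₂`:
    -- `IntermediateField.algebra'` versus `DivisionRing.toRatAlgebra`, defeq only after unfolding
    rfl
  simpa only [abs_mul, abs_pow] using abs_discr_le_of_isIntegral b hint hdisc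
end
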